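/- Let 𝒳 be a non-trivial positive and coherent category which is well-pointed. The following are equivalent: (1) Sub(X) is an atomic lattice for every object X of 𝒳; (2) the functor pt : 𝒳 → Set is conservative (reflects isomorphisms). -/

import Mathlib

open CategoryTheory CategoryTheory.Limits Opposite

universe w' w v u

namespace Paper

variable {C : Type u} [Category.{v} C]

/-- "X ≇ 0": the object `X` is not initial. -/
def NonInitial (X : C) : Prop := IsInitial X → False

/-- The category is non-trivial: `0 ≇ 1`, i.e. no object is both initial and terminal. -/
def NonTrivialCat (C : Type u) [Category.{v} C] : Prop :=
  ∀ X : C, IsInitial X → IsTerminal X → False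

section Terminal
variable (C) [HasTerminal C]

/-- The category is well-pointed: the functor of points `pt = Hom(1, -)` is faithful. -/
def WellPointed : Prop :=
  ∀ ⦃X Y : C⦄ (f g : X ⟶ Y), (∀ p : ⊤_ C ⟶ X, p ≫ f = p ≫ g) → f = g

/-- The unique morphism `X ⟶ 1` is a retraction for every `X ≇ 0`. -/
def EnoughPoints : Prop :=
  ∀ X : C, NonInitial X → Nonempty (SplitEpi (terminal.from X))

end Terminal

/-- `b` is the bottom element of `Sub(X)`. -/
def IsBotIn {X : C} (b : Subobject X) : Prop := ∀ S : Subobject X, b ≤ S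

/-- `S` is an atom of the subobject lattice `Sub(X)`. -/
def IsAtomIn {X : C} (S : Subobject X) : Prop :=
  ¬ IsBotIn S ∧ ∀ T : Subobject X, T < S → IsBotIn T

/-- `Sub(X)` is atomic: every subobject is the supremum of the atoms below it. -/
def AtomicSubobjects (X : C) : Prop :=
  ∀ S : Subobject X, IsLUB {A : Subobject X | IsAtomIn A ∧ A ≤ S} S

/-- `S` is a complemented subobject: it has a complement `T` with `S ⊓ T = ⊥`, `S ⊔ T = ⊤`. -/
def IsComplementedSub {X : C} (S : Subobject X) : Prop :=
  ∃ T m : Subobject X, IsGLB {S, T} m ∧ IsBotIn m ∧ IsLUB {S, T} ⊤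

/-- A (non-empty) filter of the Boolean center `B(X)` of `Sub(X)`. -/
structure CenterFilter (X : C) where
  carrier : Set (Subobject X)
  mem_complemented : ∀ S ∈ carrier, IsComplementedSub S
  nonempty : carrier.Nonempty
  inf_mem : ∀ S ∈ carrier, ∀ T ∈ carrier, ∀ m : Subobject X, IsGLB {S, T} m → m ∈ carrier
  mem_of_le : ∀ S ∈ carrier, ∀ T : Subobject X, IsComplementedSub T → S ≤ T → T ∈ carrier

theorem CenterFilter.ext' {X : C} {F G : CenterFilter X} (h : F.carrier = G.carrier) : F = G := by
  cases F; cases G; cases h; rfl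

/-- Filters of the Boolean center, ordered by reverse inclusion. -/
instance (X : C) : PartialOrder (CenterFilter X) where
  le F G := G.carrier ⊆ F.carrier
  le_refl _ := subset_rfl
  le_trans _ _ _ h1 h2 := fun _ hx => h1 (h2 hx)
  le_antisymm _ _ h1 h2 := CenterFilter.ext' (Set.Subset.antisymm h2 h1)

/-- An object `X` is filtral if `Sub(X)` is isomorphic, as a lattice, to the lattice of
non-empty filters of the Boolean center of `Sub(X)`. -/
def FiltralObject (X : C) : Prop :=
  Nonempty (Subobject X ≃o CenterFilter X)

/-- A category is filtral if every object is covered by a filtral one. -/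
def Filtral (C : Type u) [Category.{v} C] : Prop :=
  ∀ Y : C, ∃ (X : C) (f : X ⟶ Y), Nonempty (RegularEpi f) ∧ FiltralObject X

/-- `Sub(X)` is a complete lattice (every subset has an infimum). -/
def MonoCompleteAt (X : C) : Prop :=
  ∀ s : Set (Subobject X), ∃ m : Subobject X, IsGLB s m

/-- The category is mono-complete: every subobject poset is a complete lattice. -/
def MonoComplete (C : Type u) [Category.{v} C] : Prop := ∀ X : C, MonoCompleteAt X

section Points
variable [HasTerminal C]

/-- `Vs S` is the set of points of `X` factoring through the subobject `S`. -/
def Vs {X : C} (S : Subobject X) : Set (⊤_ C ⟶ X) := {p | S.Factors p}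

open Classical in
/-- `Cg T` is the smallest subobject of `X` through which every point in `T` factors
(defined whenever the relevant infimum exists). -/
noncomputable def Cg {X : C} (T : Set (⊤_ C ⟶ X)) : Subobject X :=
  if h : ∃ m : Subobject X, IsGLB {S : Subobject X | ∀ p ∈ T, S.Factors p} m
  then h.choose else ⊤

/-- The closure operator `cl = Vs ∘ Cg` on the power set of `pt X`. -/
noncomputable def cl {X : C} (T : Set (⊤_ C ⟶ X)) : Set (⊤_ C ⟶ X) := Vs (Cg T)

end Points

/-- Images are stable under pullback (together with finite limits and images, this is
the definition of a regular category). -/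
class StableImages (C : Type u) [Category.{v} C] [HasFiniteLimits C] [HasImages C] : Prop where
  image_pullback : ∀ {X Y Z : C} (f : X ⟶ Y) (g : Z ⟶ Y),
    (Subobject.pullback g).obj (imageSubobject f) = imageSubobject (pullback.snd f g)

/-- The extra structure of a coherent category: each `Sub(X)` has finite joins and these
are preserved by the pullback functors. -/
class CoherentJoins (C : Type u) [Category.{v} C] [HasPullbacks C] : Prop where
  exists_bot : ∀ X : C, ∃ b : Subobject X, IsBotIn b
  exists_sup : ∀ {X : C} (S T : Subobject X), ∃ U : Subobject X, IsLUB {S, T} U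
  pullback_bot : ∀ {X Y : C} (f : X ⟶ Y) (b : Subobject Y),
    IsBotIn b → IsBotIn ((Subobject.pullback f).obj b)
  pullback_sup : ∀ {X Y : C} (f : X ⟶ Y) (S T U : Subobject Y), IsLUB {S, T} U →
    IsLUB {(Subobject.pullback f).obj S, (Subobject.pullback f).obj T}
      ((Subobject.pullback f).obj U)

/-- An internal equivalence relation: a jointly-monic pair which is reflexive, symmetric and
transitive (expressed via generalised elements). -/
structure IsEquivRelPair {R X : C} (r₁ r₂ : R ⟶ X) : Prop where
  jointlyMono : ∀ {Z : C} (a b : Z ⟶ R), a ≫ r₁ = b ≫ r₁ → a ≫ r₂ = b ≫ r₂ → a = b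
  refl : ∀ {Z : C} (a : Z ⟶ X), ∃ h : Z ⟶ R, h ≫ r₁ = a ∧ h ≫ r₂ = a
  symm : ∀ {Z : C} (a b : Z ⟶ X), (∃ h : Z ⟶ R, h ≫ r₁ = a ∧ h ≫ r₂ = b) →
    ∃ h : Z ⟶ R, h ≫ r₁ = b ∧ h ≫ r₂ = a
  trans : ∀ {Z : C} (a b c : Z ⟶ X), (∃ h : Z ⟶ R, h ≫ r₁ = a ∧ h ≫ r₂ = b) →
    (∃ h : Z ⟶ R, h ≫ r₁ = b ∧ h ≫ r₂ = c) →
    ∃ h : Z ⟶ R, h ≫ r₁ = a ∧ h ≫ r₂ = c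

/-- Every internal equivalence relation is effective: it is the kernel pair of its
coequaliser. -/
def EffectiveEquivRels (C : Type u) [Category.{v} C] : Prop :=
  ∀ {R X : C} (r₁ r₂ : R ⟶ X), IsEquivRelPair r₁ r₂ →
    ∃ (Y : C) (q : X ⟶ Y) (w : r₁ ≫ q = r₂ ≫ q),
      Nonempty (IsColimit (Cofork.ofπ q w)) ∧ Nonempty (IsLimit (PullbackCone.mk r₁ r₂ w))

/-- An object is decidable if its diagonal is a complemented subobject of `X ⨯ X`. -/
def DecidableObj [HasBinaryProducts C] (X : C) : Prop :=
  ∃ (Y : C) (g : Y ⟶ X ⨯ X), Nonempty (IsColimit (BinaryCofan.mk (diag X) g))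

/-- An object is pro-decidable if it is a codirected (cofiltered) limit of decidable objects. -/
def ProDecidableObj [HasBinaryProducts C] (X : C) : Prop :=
  ∃ (J : Type v) (_ : SmallCategory J) (_ : IsCofiltered J) (D : J ⥤ C) (c : Cone D),
    (∀ j, DecidableObj (D.obj j)) ∧ Nonempty (IsLimit c) ∧ Nonempty (c.pt ≅ X)

/-!
Under these hypotheses the atoms of `Sub(X)` are exactly the subobjects `1 ↣ X` given by
points: a subobject without points is the bottom, since in a well-pointed category the two
coprojections `X ⟶ X ⨿ X` of an object `X` without points coincide, so that `X` is their
pullback, which is initial by disjointness. Hence either condition lets one decide `S ≤ T` in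
`Sub(X)` by checking that every point of `X` lying in `S` lies in `T`: if `Sub(X)` is atomic
because `S` is the join of its points, and if `pt` is conservative because `S ⊓ T ↣ S` is then
bijective on points. A morphism `f` bijective on points is mono by well-pointedness, and the
criterion gives `mk f = ⊤`.
-/

lemma mk_le_iff_factors {X Y : C} (f : Y ⟶ X) [Mono f] (S : Subobject X) :
    Subobject.mk f ≤ S ↔ S.Factors f :=
  ⟨fun h => Subobject.factors_of_le f h (Subobject.mk_factors_self f),
    fun h => Subobject.mk_le_of_comm (S.factorThru f h) (S.factorThru_arrow f h)⟩

lemma isBotIn_of_isInitial {X : C} {S : Subobject X} (h : IsInitial (S : C)) : IsBotIn S :=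
  fun _ => Subobject.le_of_comm (h.to _) (h.hom_ext _ _)

section PointsDetermineSubobjects

variable [HasTerminal C]

lemma mono_of_injective_points (hwp : WellPointed C) {X Y : C} (f : X ⟶ Y)
    (hf : Function.Injective (fun p : ⊤_ C ⟶ X => p ≫ f)) : Mono f :=
  ⟨fun a b hab => hwp a b fun p => hf (by simp only [Category.assoc, hab])⟩

lemma le_of_forall_factors_of_conservative [HasPullbacks C]
    (hcons : ∀ {X Y : C} (f : X ⟶ Y), Function.Bijective (fun p : ⊤_ C ⟶ X => p ≫ f) → IsIso f)
    {X : C} {S T : Subobject X} (h : ∀ p : ⊤_ C ⟶ X, S.Factors p → T.Factors p) : S ≤ T := by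
  let incl : ((S ⊓ T : Subobject X) : C) ⟶ S := Subobject.ofLE _ _ inf_le_left
  have hincl : incl ≫ S.arrow = (S ⊓ T).arrow := Subobject.ofLE_arrow _
  have : Mono incl := mono_of_mono_fac hincl
  have hsurj : Function.Surjective (fun p : ⊤_ C ⟶ ((S ⊓ T : Subobject X) : C) => p ≫ incl) := by
    intro q
    have hq : (S ⊓ T).Factors (q ≫ S.arrow) := (Subobject.inf_factors _).2
      ⟨Subobject.factors_comp_arrow q, h _ (Subobject.factors_comp_arrow q)⟩
    refine ⟨(S ⊓ T).factorThru _ hq, (cancel_mono S.arrow).1 ?_⟩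
    simp only [Category.assoc, hincl, Subobject.factorThru_arrow]
  have : IsIso incl := hcons incl ⟨fun _ _ => (cancel_mono incl).1, hsurj⟩
  exact (Subobject.le_of_comm (inv incl) (by rw [IsIso.inv_comp_eq, hincl])).trans inf_le_right

lemma eq_of_mk_point_factors {X : C} (p q : ⊤_ C ⟶ X) (h : (Subobject.mk p).Factors q) :
    q = p := by
  obtain ⟨g, hg⟩ := (Subobject.mk_factors_iff p q).1 h
  rw [← hg, terminal.hom_ext g (𝟙 _)]
  exact Category.id_comp p

lemma nonempty_point_of_nonInitial [HasBinaryCoproducts C] [BinaryCoproductsDisjoint C]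
    (hwp : WellPointed C) {X : C} (hX : NonInitial X) : Nonempty (⊤_ C ⟶ X) := by
  by_contra hempty
  have hinl : (coprod.inl : X ⟶ X ⨿ X) = coprod.inr := hwp _ _ fun p => (hempty ⟨p⟩).elim
  have comm : 𝟙 X ≫ (coprod.inl : X ⟶ X ⨿ X) = 𝟙 X ≫ coprod.inr := by rw [hinl]
  have hlim : IsLimit (PullbackCone.mk (𝟙 X) (𝟙 X) comm) := by
    refine PullbackCone.IsLimit.mk comm (fun s => s.fst) (fun s => Category.comp_id _)
      (fun s => ?_) (fun s m h₁ _ => by simpa using h₁)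
    simpa using hwp s.fst s.snd fun p => (hempty ⟨p ≫ s.fst⟩).elim
  exact hX (IsInitial.ofBinaryCoproductDisjointOfIsLimit _ hlim)

lemma nonempty_point_of_not_isBotIn [HasBinaryCoproducts C] [BinaryCoproductsDisjoint C]
    (hwp : WellPointed C) {X : C} {S : Subobject X} (hS : ¬ IsBotIn S) :
    Nonempty (⊤_ C ⟶ (S : C)) :=
  nonempty_point_of_nonInitial hwp fun hI => hS (isBotIn_of_isInitial hI)

lemma not_isBotIn_mk_point [HasInitial C] [InitialMonoClass C] (hnt : NonTrivialCat C)
    {X : C} (p : ⊤_ C ⟶ X) : ¬ IsBotIn (Subobject.mk p) := by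
  intro hbot
  have toInitial : ⊤_ C ⟶ ⊥_ C :=
    Subobject.ofMkLEMk p (initial.to X) (hbot (Subobject.mk (initial.to X)))
  exact hnt _ (initialIsInitial.ofIso
    ⟨initial.to _, toInitial, initial.hom_ext _ _, terminal.hom_ext _ _⟩) terminalIsTerminal

attribute [local instance] initialMonoClass_of_coproductsDisjoint

variable [HasInitial C] [HasBinaryCoproducts C] [BinaryCoproductsDisjoint C]

lemma isAtomIn_mk_point (hnt : NonTrivialCat C) (hwp : WellPointed C) {X : C}
    (p : ⊤_ C ⟶ X) : IsAtomIn (Subobject.mk p) := by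
  refine ⟨not_isBotIn_mk_point hnt p, fun T hT => ?_⟩
  by_contra hT_bot
  obtain ⟨q⟩ := nonempty_point_of_not_isBotIn hwp hT_bot
  have hq : q ≫ T.arrow = p :=
    eq_of_mk_point_factors p _ (Subobject.factors_of_le _ hT.le (Subobject.factors_comp_arrow q))
  exact hT.not_ge (Subobject.mk_le_of_comm q hq)

lemma exists_eq_mk_point_of_isAtomIn (hnt : NonTrivialCat C) (hwp : WellPointed C) {X : C}
    {A : Subobject X} (hA : IsAtomIn A) : ∃ p : ⊤_ C ⟶ X, A = Subobject.mk p := by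
  obtain ⟨q⟩ := nonempty_point_of_not_isBotIn hwp hA.1
  have hle : Subobject.mk (q ≫ A.arrow) ≤ A := Subobject.mk_le_of_comm q rfl
  refine ⟨q ≫ A.arrow, ?_⟩
  by_contra hne
  exact not_isBotIn_mk_point hnt _ (hA.2 _ (lt_of_le_of_ne hle (Ne.symm hne)))

lemma le_of_forall_factors_of_atomic (hnt : NonTrivialCat C) (hwp : WellPointed C) {X : C}
    (hat : AtomicSubobjects X) {S T : Subobject X}
    (h : ∀ p : ⊤_ C ⟶ X, S.Factors p → T.Factors p) : S ≤ T := by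
  refine (hat S).2 fun A ⟨hA, hAS⟩ => ?_
  obtain ⟨p, rfl⟩ := exists_eq_mk_point_of_isAtomIn hnt hwp hA
  exact (mk_le_iff_factors _ _).2 (h p ((mk_le_iff_factors _ _).1 hAS))

end PointsDetermineSubobjects

theorem atomic_iff_pt_conservative_general
    [HasFiniteLimits C]
    [HasFiniteCoproducts C] [BinaryCoproductsDisjoint C]
    (hnt : NonTrivialCat C) (hwp : WellPointed C) :
    (∀ X : C, AtomicSubobjects X) ↔
      ∀ {X Y : C} (f : X ⟶ Y),
        Function.Bijective (fun p : ⊤_ C ⟶ X => p ≫ f) → IsIso f := by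
  constructor
  · intro hat X Y f hbij
    have := mono_of_injective_points hwp f hbij.1
    refine (Subobject.isIso_iff_mk_eq_top f).2 (top_le_iff.1 ?_)
    refine le_of_forall_factors_of_atomic hnt hwp (hat Y) fun q _ => ?_
    obtain ⟨p, rfl⟩ := hbij.2 q
    exact (Subobject.mk_factors_iff f _).2 ⟨p, rfl⟩
  · intro hcons X S
    refine ⟨fun A hA => hA.2, fun U hU => le_of_forall_factors_of_conservative hcons ?_⟩
    intro p hp
    have hpU : Subobject.mk p ≤ U := hU ⟨isAtomIn_mk_point hnt hwp p, (mk_le_iff_factors _ _).2 hp⟩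
    exact (mk_le_iff_factors _ _).1 hpU

/-- In a non-trivial well-pointed positive coherent category, all subobject lattices are
atomic iff the functor of points is conservative. -/
theorem atomic_iff_pt_conservative
    [WellPowered.{v} C] [HasFiniteLimits C] [HasImages C] [StableImages C] [CoherentJoins C]
    [HasFiniteCoproducts C] [BinaryCoproductsDisjoint C]
    (hnt : NonTrivialCat C) (hwp : WellPointed C) :
    (∀ X : C, AtomicSubobjects X) ↔
      ∀ {X Y : C} (f : X ⟶ Y),
        Function.Bijective (fun p : ⊤_ C ⟶ X => p ≫ f) → IsIso f :=
  atomic_iff_pt_conservative_general hnt hwp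

end Paper
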